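/- Let V be a finite-dimensional complex vector space, N, E, R endomorphisms of V, and h a nonzero complex number. Suppose [N, R] = −N and [E, R] = (h−1)E. Define matrix-valued functions on G_m × G_m (coordinates t, z): A(t,z) = (N + tE)/(tz) and B(t,z) = −h(N + tE)/z² + R/z. Then ∂_z A − ∂_t B = [A, B], i.e., the connection d + A dt + B dz is flat. -/

import Mathlib

/-!
Both `A` and `B` are built from the single operator `N + tE` and from `R`, so the bracket
`[A, B]` reduces to `[N + tE, R] = -N + t(h - 1)E` by the two commutation relations, while the
derivatives only see the explicit scalar coefficients; flatness is then an identity of rational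
functions in `t` and `z`.
-/

section Derivatives

variable {𝕜 F : Type*} [NontriviallyNormedField 𝕜] [NormedAddCommGroup F] [NormedSpace 𝕜 F]

theorem hasDerivAt_mul_inv_smul (t : 𝕜) (v : F) {z : 𝕜} (hz : z ≠ 0) :
    HasDerivAt (fun z' => (t * z')⁻¹ • v) ((-(t * z ^ 2)⁻¹) • v) z := by
  have hinv := ((hasDerivAt_inv hz).const_mul t⁻¹).smul_const v
  simpa only [mul_inv, mul_neg] using hinv

theorem hasDerivAt_smul_add_smul_add (c : 𝕜) (u v w : F) (t : 𝕜) :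
    HasDerivAt (fun t' => c • (u + t' • v) + w) (c • v) t := by
  simpa using ((((hasDerivAt_id t).smul_const v).const_add u).const_smul c).add_const w

end Derivatives

section Commutators

variable {𝕜 A : Type*} [CommRing 𝕜] [Ring A] [Module 𝕜 A] [IsScalarTower 𝕜 A A]
  [SMulCommClass 𝕜 A A]

theorem smul_commutator_smul_add_smul (M R : A) (c d e : 𝕜) :
    c • M * (d • M + e • R) - (d • M + e • R) * (c • M) = (c * e) • (M * R - R * M) := by
  simp only [mul_add, add_mul, smul_mul_assoc, mul_smul_comm, smul_smul, smul_sub]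
  module

theorem commutator_add_smul_of_commutator_eq {N E R : A} {t h : 𝕜} (hNR : N * R - R * N = -N)
    (hER : E * R - R * E = (h - 1) • E) :
    (N + t • E) * R - R * (N + t • E) = -N + (t * (h - 1)) • E := by
  calc (N + t • E) * R - R * (N + t • E) = (N * R - R * N) + t • (E * R - R * E) := by
        simp only [add_mul, mul_add, smul_mul_assoc, mul_smul_comm, smul_sub]
        abel
    _ = -N + (t * (h - 1)) • E := by rw [hNR, hER, smul_smul]

end Commutators

theorem stmt3_general {V : Type*} [NormedAddCommGroup V] [NormedSpace ℂ V]
    (N E R : V →L[ℂ] V) (h : ℂ)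
    (hNR : N * R - R * N = -N)
    (hER : E * R - R * E = (h - 1) • E)
    (A B : ℂ → ℂ → (V →L[ℂ] V))
    (hA : ∀ t z, A t z = (t * z)⁻¹ • (N + t • E))
    (hB : ∀ t z, B t z = (-(h / z ^ 2)) • (N + t • E) + z⁻¹ • R)
    (t z : ℂ) (ht : t ≠ 0) (hz : z ≠ 0) :
    deriv (fun z' => A t z') z - deriv (fun t' => B t' z) t
      = A t z * B t z - B t z * A t z := by
  simp only [hA, hB]
  rw [(hasDerivAt_mul_inv_smul t (N + t • E) hz).deriv,
    (hasDerivAt_smul_add_smul_add (-(h / z ^ 2)) N E (z⁻¹ • R) t).deriv, smul_commutator_smul_add_smul, commutator_add_smul_of_commutator_eq hNR hER]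
  match_scalars
  · field_simp
  · field_simp
    ring

/-- Integrability of the rescaled Frenkel–Gross connection: with `[N,R] = -N`,
`[E,R] = (h-1)E`, `A(t,z) = (N + tE)/(tz)`, `B(t,z) = -h(N + tE)/z² + R/z`, one has
`∂_z A - ∂_t B = [A, B]` on `𝔾_m × 𝔾_m`. -/
theorem stmt3 {V : Type*} [NormedAddCommGroup V] [NormedSpace ℂ V] [FiniteDimensional ℂ V]
    (N E R : V →L[ℂ] V) (h : ℂ) (hh : h ≠ 0)
    (hNR : N * R - R * N = -N)
    (hER : E * R - R * E = (h - 1) • E)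
    (A B : ℂ → ℂ → (V →L[ℂ] V))
    (hA : ∀ t z, A t z = (t * z)⁻¹ • (N + t • E))
    (hB : ∀ t z, B t z = (-(h / z ^ 2)) • (N + t • E) + z⁻¹ • R)
    (t z : ℂ) (ht : t ≠ 0) (hz : z ≠ 0) :
    deriv (fun z' => A t z') z - deriv (fun t' => B t' z) t
      = A t z * B t z - B t z * A t z :=
  stmt3_general N E R h hNR hER A B hA hB t z ht hz
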